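/- Let G be a graph in which every edge lies in exactly one triangle and G contains no cycles of length 4 through k (k ≥ 4), other than its triangles having length 3. Then the 3-uniform hypergraph whose hyperedges are the vertex sets of the triangles of G contains no Berge-C_i for any 2 ≤ i ≤ k. -/

import Mathlib

open SimpleGraph Finset

/-- `G'` is a copy of `H` in `G` (a subgraph isomorphic to `H`). -/
def IsCopyOf {W V : Type*} (H : SimpleGraph W) {G : SimpleGraph V} (G' : G.Subgraph) : Prop :=
  Nonempty (H ≃g G'.coe)

/-- `G` contains no subgraph isomorphic to `F`. -/
def FreeOf {W V : Type*} (F : SimpleGraph W) (G : SimpleGraph V) : Prop :=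
  ∀ G' : G.Subgraph, ¬ IsCopyOf F G'

/-- The number of copies (subgraphs isomorphic to `H`) of `H` in `G`. -/
noncomputable def numCopies {W V : Type*} (H : SimpleGraph W) (G : SimpleGraph V) : ℕ :=
  {G' : G.Subgraph | IsCopyOf H G'}.ncard

/-- The Turán number `ex(n, F)`. -/
noncomputable def exE (n : ℕ) {W : Type*} (F : SimpleGraph W) : ℕ :=
  sSup {m | ∃ G : SimpleGraph (Fin n), FreeOf F G ∧ G.edgeSet.ncard = m}

/-- The generalized Turán number `ex(n, H, F)`. -/
noncomputable def exC (n : ℕ) {U W : Type*} (H : SimpleGraph U) (F : SimpleGraph W) : ℕ :=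
  sSup {m | ∃ G : SimpleGraph (Fin n), FreeOf F G ∧ numCopies H G = m}

/-- The hypergraph `H` contains a Berge cycle of length `i`: distinct vertices
`v 0, …, v (i-1)` and distinct hyperedges `e 0, …, e (i-1)` of `H` with
`v j, v (j+1 mod i) ∈ e j` for all `j < i`. -/
def HasBergeCycle {V : Type*} (i : ℕ) (H : Finset (Finset V)) : Prop :=
  ∃ (v : ℕ → V) (e : ℕ → Finset V),
    (∀ j1 j2, j1 < i → j2 < i → v j1 = v j2 → j1 = j2) ∧
    (∀ j1 j2, j1 < i → j2 < i → e j1 = e j2 → j1 = j2) ∧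
    (∀ j < i, e j ∈ H) ∧
    (∀ j < i, v j ∈ e j ∧ v ((j + 1) % i) ∈ e j)

theorem stmt19 {V : Type*} [Fintype V] [DecidableEq V] (G : SimpleGraph V)
    [DecidableRel G.Adj] (k : ℕ) (hk : 4 ≤ k)
    (htri : ∀ x y, G.Adj x y → ∃! s, s ∈ G.cliqueFinset 3 ∧ x ∈ s ∧ y ∈ s)
    (hcyc : ∀ i, 4 ≤ i → i ≤ k → FreeOf (cycleGraph i) G) :
    ∀ i, 2 ≤ i → i ≤ k → ¬ HasBergeCycle i (G.cliqueFinset 3) := by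
  intro i hi2 hik hB
  obtain ⟨v, e, hv, he, heH, hmem⟩ := hB
  have hsucc_ne : ∀ j < i, (j + 1) % i ≠ j := by
    intro j hj h
    rcases Nat.lt_or_ge (j + 1) i with h' | h'
    · rw [Nat.mod_eq_of_lt h'] at h; omega
    · have hji : j + 1 = i := by omega
      rw [hji, Nat.mod_self] at h; omega
  have hadj : ∀ j < i, G.Adj (v j) (v ((j + 1) % i)) := by
    intro j hj
    have h1 := mem_cliqueFinset_iff.mp (heH j hj)
    have hne : v j ≠ v ((j + 1) % i) := by
      intro h
      exact hsucc_ne j hj (hv _ _ (Nat.mod_lt _ (by omega)) hj h.symm)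
    exact h1.1 (Finset.mem_coe.mpr (hmem j hj).1)
      (Finset.mem_coe.mpr (hmem j hj).2) hne
  rcases eq_or_lt_of_le hi2 with h2 | h3
  · -- i = 2
    have hm0 := hmem 0 (by omega)
    have hm1 := hmem 1 (by omega)
    rw [← h2] at hm0 hm1
    norm_num at hm0 hm1
    have ha := hadj 0 (by omega)
    rw [← h2] at ha; norm_num at ha
    obtain ⟨s, _, huniq⟩ := htri _ _ ha
    have he0 : e 0 = s := huniq _ ⟨heH 0 (by omega), hm0.1, hm0.2⟩
    have he1 : e 1 = s := huniq _ ⟨heH 1 (by omega), hm1.2, hm1.1⟩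
    exact absurd (he 0 1 (by omega) (by omega) (he0.trans he1.symm)) (by omega)
  rcases eq_or_lt_of_le (show 3 ≤ i from h3) with h3 | h4
  · -- i = 3
    have ha0 := hadj 0 (by omega)
    have ha1 := hadj 1 (by omega)
    have ha2 := hadj 2 (by omega)
    rw [← h3] at ha0 ha1 ha2
    norm_num at ha0 ha1 ha2
    have hm0 := hmem 0 (by omega); have hm1 := hmem 1 (by omega)
    rw [← h3] at hm0 hm1; norm_num at hm0 hm1
    have ht : ({v 0, v 1, v 2} : Finset V) ∈ G.cliqueFinset 3 := by
      rw [mem_cliqueFinset_iff]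
      exact is3Clique_triple_iff.mpr ⟨ha0, ha2.symm, ha1⟩
    obtain ⟨s, _, huniq⟩ := htri _ _ ha0
    have he0 : e 0 = s := huniq _ ⟨heH 0 (by omega), hm0.1, hm0.2⟩
    have ht0 : ({v 0, v 1, v 2} : Finset V) = s := huniq _ ⟨ht, by simp, by simp⟩
    obtain ⟨s', _, huniq'⟩ := htri _ _ ha1
    have he1 : e 1 = s' := huniq' _ ⟨heH 1 (by omega), hm1.1, hm1.2⟩
    have ht1 : ({v 0, v 1, v 2} : Finset V) = s' := huniq' _ ⟨ht, by simp, by simp⟩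
    have : e 0 = e 1 := by rw [he0, ← ht0, ht1, ← he1]
    exact absurd (he 0 1 (by omega) (by omega) this) (by omega)
  · -- 4 ≤ i
    have hi4 : 4 ≤ i := h4
    haveI : NeZero i := ⟨by omega⟩
    have h1i : (1 : Fin i).val = 1 := by
      rw [Fin.val_one', Nat.mod_eq_of_lt (by omega)]
    have hvala : ∀ a : Fin i, (a + 1).val = (a.val + 1) % i := by
      intro a
      rw [Fin.val_add, h1i]
    have hadjF : ∀ a : Fin i, G.Adj (v a.val) (v ((a.val + 1) % i)) :=
      fun a => hadj a.val a.isLt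
    let C : G.Subgraph :=
      { verts := Set.range fun j : Fin i => v j.val
        Adj := fun x y => ∃ j : Fin i,
          (x = v j.val ∧ y = v ((j.val + 1) % i)) ∨
          (y = v j.val ∧ x = v ((j.val + 1) % i))
        adj_sub := by
          rintro x y ⟨j, ⟨rfl, rfl⟩ | ⟨rfl, rfl⟩⟩
          · exact hadjF j
          · exact (hadjF j).symm
        edge_vert := by
          rintro x y ⟨j, ⟨rfl, -⟩ | ⟨-, rfl⟩⟩
          · exact ⟨j, rfl⟩
          · exact ⟨j + 1, congrArg v (hvala j)⟩
        symm := by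
          constructor
          rintro x y ⟨j, h | h⟩
          · exact ⟨j, Or.inr h⟩
          · exact ⟨j, Or.inl h⟩ }
    have hvinj : Function.Injective fun j : Fin i => (⟨v j.val, ⟨j, rfl⟩⟩ : C.verts) := by
      intro a b hab
      have : v a.val = v b.val := congrArg Subtype.val hab
      exact Fin.ext (hv _ _ a.isLt b.isLt this)
    have hvsurj : Function.Surjective fun j : Fin i => (⟨v j.val, ⟨j, rfl⟩⟩ : C.verts) := by
      rintro ⟨x, j, rfl⟩
      exact ⟨j, rfl⟩
    have hiso : Nonempty (cycleGraph i ≃g C.coe) := by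
      refine ⟨⟨Equiv.ofBijective _ ⟨hvinj, hvsurj⟩, ?_⟩⟩
      intro a b
      show C.Adj _ _ ↔ _
      rw [cycleGraph_adj']
      constructor
      · rintro ⟨j, ⟨ha, hb⟩ | ⟨hb, ha⟩⟩
        · have ha' : v a.val = v j.val := ha
          have hb' : v b.val = v ((j.val + 1) % i) := hb
          have hja : j = a := Fin.ext (hv _ _ j.isLt a.isLt ha'.symm)
          have hjb : j + 1 = b := by
            refine Fin.ext (hv _ _ (j + 1).isLt b.isLt ?_)
            rw [hvala, ← hb']
          subst hja
          right
          rw [← hjb, add_sub_cancel_left, h1i]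
        · have hb' : v b.val = v j.val := hb
          have ha' : v a.val = v ((j.val + 1) % i) := ha
          have hjb : j = b := Fin.ext (hv _ _ j.isLt b.isLt hb'.symm)
          have hja : j + 1 = a := by
            refine Fin.ext (hv _ _ (j + 1).isLt a.isLt ?_)
            rw [hvala, ← ha']
          subst hjb
          left
          rw [← hja, add_sub_cancel_left, h1i]
      · rintro (h | h)
        · have hab : a = b + 1 := by
            have h1 : a - b = 1 := Fin.ext (by rw [h1i]; exact h)
            have := sub_eq_iff_eq_add.mp h1
            rw [this, add_comm]
          refine ⟨b, Or.inr ⟨rfl, ?_⟩⟩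
          show v a.val = v ((b.val + 1) % i)
          rw [← hvala, ← hab]
        · have hab : b = a + 1 := by
            have h1 : b - a = 1 := Fin.ext (by rw [h1i]; exact h)
            have := sub_eq_iff_eq_add.mp h1
            rw [this, add_comm]
          refine ⟨a, Or.inl ⟨rfl, ?_⟩⟩
          show v b.val = v ((a.val + 1) % i)
          rw [← hvala, ← hab]
    exact hcyc i hi4 hik C hiso
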